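/- Let d ∈ {2,3} and s ∈ [0, 1/2]. There exists a constant C > 0, depending only on d and s, such that for all k, t > 0 with kt ≥ 1 and all measurable functions F, G : ℝ^d → [0, ∞), ∫_{Ω₂} |m_{k,t}(ξ) + (2kt/‖ξ⁻‖ − 1)^{d−2} m_{k,t}(ξ*)| · (1 + ‖ξ‖²)^s · F(ξ) G(ξ) dξ ≤ C k^{2s} t^{2s−2} ‖F‖_{L²(ℝ^d)} ‖G‖_{L²(ℝ^d)}, where Ω₂ := {ξ ∈ ℝ^d : kt < ‖ξ⁻‖ < 3kt/2 and |ξ_d| < kt/2} and ξ* := ((2kt/‖ξ⁻‖ − 1)ξ⁻, −ξ_d). -/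

import Mathlib

/-!
On `Ω₂` write `r = ‖ξ⁻‖ = kt + a` with `0 < a < kt/2` and `b = ξ_d`. The reflection `ξ ↦ ξ*`
maps `r` to `2kt − r` and `b` to `−b`, and the two denominators add up to the real number
`2(a² + b²)`: the singularities of `m` and `m(· *)` on the characteristic sphere `r = kt`, `b = 0`
cancel. Since `|den(ξ)| ≳ kt·a + kt·|b|` and likewise for `ξ*`, this gives
`|m(ξ) + m(ξ*)| ≲ k²/(kt)² = 1/t²`; the factor `(2kt/r − 1)^{d−2}` differs from `1` by at most
`2a/r`, which is again compensated by `|den(ξ*)| ≳ kt·a`. On `Ω₂` the weight is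
`(1 + ‖ξ‖²)^s ≤ 4^s (kt)^{2s}` since `kt ≥ 1`, and Cauchy–Schwarz concludes.
-/

open MeasureTheory
open scoped ENNReal

/-- `‖ξ⁻‖`, the Euclidean norm of the first `d − 1` coordinates of `ξ ∈ ℝ^d`. -/
noncomputable def xiMinusNorm {d : ℕ} (ξ : EuclideanSpace ℝ (Fin d)) : ℝ :=
  Real.sqrt (∑ i ∈ Finset.univ.filter (fun i : Fin d => (i : ℕ) < d - 1), ξ i ^ 2)

/-- `ξ_d`, the last coordinate of `ξ ∈ ℝ^d`. -/
noncomputable def xiLast {d : ℕ} (hd : 0 < d) (ξ : EuclideanSpace ℝ (Fin d)) : ℝ :=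
  ξ ⟨d - 1, Nat.sub_lt hd one_pos⟩

/-- The symbol denominator `den_{k,t}(ξ) = (‖ξ⁻‖² − k²t² + ξ_d²) + 2ik√(t²+1)ξ_d`. -/
noncomputable def denom (k t : ℝ) {d : ℕ} (hd : 0 < d) (ξ : EuclideanSpace ℝ (Fin d)) : ℂ :=
  ((xiMinusNorm ξ ^ 2 - k ^ 2 * t ^ 2 + xiLast hd ξ ^ 2 : ℝ) : ℂ)
    + 2 * Complex.I * (k : ℂ) * (Real.sqrt (t ^ 2 + 1) : ℂ) * (xiLast hd ξ : ℂ)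

/-- The symbol `m_{k,t}(ξ) = k² / den_{k,t}(ξ)`. -/
noncomputable def mSymb (k t : ℝ) {d : ℕ} (hd : 0 < d) (ξ : EuclideanSpace ℝ (Fin d)) : ℂ :=
  (k : ℂ) ^ 2 / denom k t hd ξ

/-- The reflected point `ξ* = ((2kt/‖ξ⁻‖ − 1)ξ⁻, −ξ_d)`. -/
noncomputable def xiStar (k t : ℝ) {d : ℕ} (ξ : EuclideanSpace ℝ (Fin d)) :
    EuclideanSpace ℝ (Fin d) :=
  (EuclideanSpace.equiv (Fin d) ℝ).symm fun i =>
    if (i : ℕ) = d - 1 then -ξ i else (2 * k * t / xiMinusNorm ξ - 1) * ξ i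

/-- `den_{k,t}` written in the coordinates `r = ‖ξ⁻‖`, `b = ξ_d`, with `κ = kt` and
`K = k√(t²+1)`. -/
noncomputable def planarDen (κ K r b : ℝ) : ℂ := ⟨r ^ 2 - κ ^ 2 + b ^ 2, 2 * K * b⟩

section planarDen

variable {κ K r b : ℝ}

lemma planarDen_add_planarDen_reflect :
    planarDen κ K r b + planarDen κ K (2 * κ - r) (-b)
      = ((2 * ((r - κ) ^ 2 + b ^ 2) : ℝ) : ℂ) := by
  apply Complex.ext <;> simp only [planarDen, Complex.add_re, Complex.add_im, Complex.ofReal_re,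
    Complex.ofReal_im] <;> ring

lemma two_mul_mul_sub_le_norm_planarDen : 2 * κ * (r - κ) ≤ ‖planarDen κ K r b‖ := by
  refine le_trans ?_ ((le_abs_self _).trans (Complex.abs_re_le_norm _))
  simp only [planarDen]
  nlinarith [sq_nonneg b, sq_nonneg (r - κ)]

lemma two_mul_mul_abs_le_norm_planarDen (hK : 0 ≤ K) : 2 * K * |b| ≤ ‖planarDen κ K r b‖ := by
  refine le_trans (le_of_eq ?_) (Complex.abs_im_le_norm _)
  simp [planarDen, abs_mul, abs_of_nonneg hK]

lemma mul_mul_sub_le_norm_planarDen_reflect (hK : κ ≤ K) (hr : κ ≤ r) (hr' : r < 3 * κ / 2) :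
    3 / 4 * κ * (r - κ) ≤ ‖planarDen κ K (2 * κ - r) (-b)‖ := by
  have hκ : 0 < κ := by linarith
  rcases le_or_gt (b ^ 2) ((r - κ) * (3 * κ - r) / 2) with hb | hb
  · -- near the sphere the real part `b² − (r − κ)(3κ − r)` dominates
    refine le_trans ?_ ((neg_le_abs _).trans (Complex.abs_re_le_norm _))
    simp only [planarDen]
    nlinarith
  · -- away from it `|b| ≥ r − κ`, so the imaginary part does
    have hab : r - κ ≤ |b| := by nlinarith [sq_abs b, abs_nonneg b]
    refine le_trans ?_ (two_mul_mul_abs_le_norm_planarDen (by linarith))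
    rw [abs_neg]
    nlinarith

lemma norm_inv_add_inv_planarDen_reflect_le (hK : κ ≤ K) (hr : κ < r) (hr' : r < 3 * κ / 2) :
    ‖(planarDen κ K r b)⁻¹ + (planarDen κ K (2 * κ - r) (-b))⁻¹‖ ≤ 11 / (6 * κ ^ 2) := by
  have hκ : 0 < κ := by linarith
  set D := planarDen κ K r b
  set D' := planarDen κ K (2 * κ - r) (-b)
  have hDa : 2 * κ * (r - κ) ≤ ‖D‖ := two_mul_mul_sub_le_norm_planarDen
  have hDb : 2 * K * |b| ≤ ‖D‖ := two_mul_mul_abs_le_norm_planarDen (hκ.le.trans hK)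
  have hD'a : 3 / 4 * κ * (r - κ) ≤ ‖D'‖ := mul_mul_sub_le_norm_planarDen_reflect hK hr.le hr'
  have hD'b : 2 * K * |b| ≤ ‖D'‖ := by
    rw [← abs_neg b]; exact two_mul_mul_abs_le_norm_planarDen (hκ.le.trans hK)
  have hD : 0 < ‖D‖ := lt_of_lt_of_le (by nlinarith) hDa
  have hD' : 0 < ‖D'‖ := lt_of_lt_of_le (by nlinarith) hD'a
  rw [inv_add_inv (norm_pos_iff.mp hD) (norm_pos_iff.mp hD'), planarDen_add_planarDen_reflect,
    norm_div, norm_mul, Complex.norm_real, Real.norm_of_nonneg (by positivity),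
    div_le_div_iff₀ (mul_pos hD hD') (by positivity)]
  have hP_a : 3 / 2 * κ ^ 2 * (r - κ) ^ 2 ≤ ‖D‖ * ‖D'‖ := by
    nlinarith [mul_le_mul hDa hD'a (by nlinarith) (norm_nonneg _)]
  have hP_b : 4 * κ ^ 2 * b ^ 2 ≤ ‖D‖ * ‖D'‖ := by
    have hKb : 2 * κ * |b| ≤ 2 * K * |b| := by gcongr
    nlinarith [mul_le_mul (hKb.trans hDb) (hKb.trans hD'b) (by positivity) (norm_nonneg _),
      sq_abs b]
  nlinarith

lemma norm_inv_add_mul_inv_planarDen_reflect_le (hK : κ ≤ K) (hr : κ < r) (hr' : r < 3 * κ / 2)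
    {c : ℝ} (hc : |c - 1| ≤ 2 * (r - κ) / r) :
    ‖(planarDen κ K r b)⁻¹ + c * (planarDen κ K (2 * κ - r) (-b))⁻¹‖ ≤ 5 / κ ^ 2 := by
  have hκ : 0 < κ := by linarith
  set D' := planarDen κ K (2 * κ - r) (-b)
  have hD'a : 3 / 4 * κ * (r - κ) ≤ ‖D'‖ := mul_mul_sub_le_norm_planarDen_reflect hK hr.le hr'
  have hD' : 0 < ‖D'‖ := lt_of_lt_of_le (by nlinarith) hD'a
  have hcorr : ‖((c - 1 : ℝ) : ℂ) * D'⁻¹‖ ≤ 8 / (3 * κ ^ 2) := by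
    rw [norm_mul, norm_inv, Complex.norm_real, Real.norm_eq_abs, ← div_eq_mul_inv,
      div_le_iff₀ hD']
    calc |c - 1| ≤ 2 * (r - κ) / r := hc
      _ ≤ 2 * (r - κ) / κ := div_le_div_of_nonneg_left (by linarith) hκ hr.le
      _ = 8 / (3 * κ ^ 2) * (3 / 4 * κ * (r - κ)) := by field_simp; ring
      _ ≤ 8 / (3 * κ ^ 2) * ‖D'‖ := by gcongr
  calc _ = ‖((planarDen κ K r b)⁻¹ + D'⁻¹) + ((c - 1 : ℝ) : ℂ) * D'⁻¹‖ := by push_cast; ring_nf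
    _ ≤ 11 / (6 * κ ^ 2) + 8 / (3 * κ ^ 2) :=
      (norm_add_le _ _).trans
        (add_le_add (norm_inv_add_inv_planarDen_reflect_le hK hr hr') hcorr)
    _ ≤ 5 / κ ^ 2 := by
      rw [div_add_div _ _ (by positivity) (by positivity),
        div_le_div_iff₀ (by positivity) (by positivity)]
      nlinarith [pow_pos hκ 4]

end planarDen

section coordinates

variable {d : ℕ}

lemma norm_sq_eq_xiMinusNorm_sq_add_xiLast_sq (hd : 0 < d) (ξ : EuclideanSpace ℝ (Fin d)) :
    ‖ξ‖ ^ 2 = xiMinusNorm ξ ^ 2 + xiLast hd ξ ^ 2 := by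
  have hlast : Finset.univ.filter (fun i : Fin d => ¬ (i : ℕ) < d - 1)
      = {⟨d - 1, Nat.sub_lt hd one_pos⟩} := by
    ext i
    simp only [Finset.mem_filter, Finset.mem_univ, true_and, Finset.mem_singleton, Fin.ext_iff]
    omega
  rw [EuclideanSpace.norm_sq_eq, xiMinusNorm, Real.sq_sqrt (by positivity), xiLast,
    ← Finset.sum_filter_add_sum_filter_not _ (fun i : Fin d => (i : ℕ) < d - 1), hlast,
    Finset.sum_singleton]
  simp only [Real.norm_eq_abs, sq_abs]

lemma xiLast_xiStar (hd : 0 < d) (k t : ℝ) (ξ : EuclideanSpace ℝ (Fin d)) :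
    xiLast hd (xiStar k t ξ) = -xiLast hd ξ := by
  simp [xiLast, xiStar, EuclideanSpace.equiv]

lemma xiMinusNorm_xiStar (k t : ℝ) {ξ : EuclideanSpace ℝ (Fin d)} (h : xiMinusNorm ξ ≠ 0) :
    xiMinusNorm (xiStar k t ξ) = |2 * k * t - xiMinusNorm ξ| := by
  set l := 2 * k * t / xiMinusNorm ξ - 1
  have hsum : ∑ i ∈ Finset.univ.filter (fun i : Fin d => (i : ℕ) < d - 1), xiStar k t ξ i ^ 2
      = l ^ 2 * ∑ i ∈ Finset.univ.filter (fun i : Fin d => (i : ℕ) < d - 1), ξ i ^ 2 := by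
    rw [Finset.mul_sum]
    refine Finset.sum_congr rfl fun i hi => ?_
    have hi : (i : ℕ) ≠ d - 1 := (Finset.mem_filter.mp hi).2.ne
    simp [xiStar, EuclideanSpace.equiv, hi, l, mul_pow]
  have hr : 0 < xiMinusNorm ξ := (Real.sqrt_nonneg _).lt_of_ne' h
  calc xiMinusNorm (xiStar k t ξ) = |l| * xiMinusNorm ξ := by
        rw [xiMinusNorm, hsum, Real.sqrt_mul (sq_nonneg l), Real.sqrt_sq_eq_abs, ← xiMinusNorm]
    _ = |l * xiMinusNorm ξ| := by rw [abs_mul, abs_of_pos hr]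
    _ = |2 * k * t - xiMinusNorm ξ| := by rw [sub_mul, div_mul_cancel₀ _ h, one_mul]

lemma denom_eq_planarDen (hd : 0 < d) (k t : ℝ) (ξ : EuclideanSpace ℝ (Fin d)) :
    denom k t hd ξ = planarDen (k * t) (k * √(t ^ 2 + 1)) (xiMinusNorm ξ) (xiLast hd ξ) := by
  apply Complex.ext <;>
    simp only [denom, planarDen, Complex.add_re, Complex.add_im, Complex.mul_re, Complex.mul_im,
      Complex.ofReal_re, Complex.ofReal_im, Complex.I_re, Complex.I_im, Complex.re_ofNat,
      Complex.im_ofNat] <;> ring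

lemma denom_xiStar_eq_planarDen (hd : 0 < d) (k t : ℝ) {ξ : EuclideanSpace ℝ (Fin d)}
    (h : 0 < xiMinusNorm ξ) (h' : xiMinusNorm ξ ≤ 2 * k * t) :
    denom k t hd (xiStar k t ξ)
      = planarDen (k * t) (k * √(t ^ 2 + 1)) (2 * (k * t) - xiMinusNorm ξ) (-xiLast hd ξ) := by
  rw [denom_eq_planarDen, xiMinusNorm_xiStar k t h.ne', abs_of_nonneg (by linarith),
    xiLast_xiStar, mul_assoc]

end coordinates

lemma norm_mSymb_add_mul_mSymb_xiStar_le {d : ℕ} (hd : 0 < d) {k t : ℝ} (hk : 0 < k) (ht : 0 < t)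
    {ξ : EuclideanSpace ℝ (Fin d)} (h : k * t < xiMinusNorm ξ) (h' : xiMinusNorm ξ < 3 * k * t / 2)
    {c : ℝ} (hc : |c - 1| ≤ 2 * (xiMinusNorm ξ - k * t) / xiMinusNorm ξ) :
    ‖mSymb k t hd ξ + c * mSymb k t hd (xiStar k t ξ)‖ ≤ 5 / t ^ 2 := by
  have hkt : 0 < k * t := mul_pos hk ht
  have hK : k * t ≤ k * √(t ^ 2 + 1) :=
    mul_le_mul_of_nonneg_left ((Real.le_sqrt ht.le (by positivity)).mpr (by linarith)) hk.le
  have hbound := norm_inv_add_mul_inv_planarDen_reflect_le (b := xiLast hd ξ) hK h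
    (by linarith) hc
  rw [mSymb, mSymb, denom_eq_planarDen, denom_xiStar_eq_planarDen hd k t (hkt.trans h)
    (by linarith), div_eq_mul_inv, div_eq_mul_inv, mul_left_comm, ← mul_add, norm_mul,
    norm_pow, Complex.norm_real, Real.norm_of_nonneg hk.le]
  calc _ ≤ k ^ 2 * (5 / (k * t) ^ 2) := by gcongr
    _ = 5 / t ^ 2 := by field_simp

lemma abs_pow_sub_one_le_one_sub {l : ℝ} (h1 : l ≤ 1) {n : ℕ} (hn : n ≤ 1) :
    |l ^ n - 1| ≤ 1 - l := by
  interval_cases n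
  · simpa using h1
  · rw [pow_one, abs_sub_comm, abs_of_nonneg (by linarith)]

lemma one_add_norm_sq_rpow_le {d : ℕ} (hd : 0 < d) {κ s : ℝ} (hκ : 1 ≤ κ) (hs : 0 ≤ s)
    {ξ : EuclideanSpace ℝ (Fin d)} (h : xiMinusNorm ξ < 3 * κ / 2) (h' : |xiLast hd ξ| < κ / 2) :
    (1 + ‖ξ‖ ^ 2) ^ s ≤ 4 ^ s * (κ ^ 2) ^ s := by
  have hr : xiMinusNorm ξ ^ 2 ≤ (3 * κ / 2) ^ 2 := pow_le_pow_left₀ (Real.sqrt_nonneg _) h.le 2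
  have hb : xiLast hd ξ ^ 2 ≤ (κ / 2) ^ 2 := by
    rw [← sq_abs]; exact pow_le_pow_left₀ (abs_nonneg _) h'.le 2
  rw [← Real.mul_rpow (by norm_num) (by positivity)]
  refine Real.rpow_le_rpow (by positivity) ?_ hs
  rw [norm_sq_eq_xiMinusNorm_sq_add_xiLast_sq hd]
  nlinarith

section CauchySchwarz

variable {α : Type*} [MeasurableSpace α] (μ : Measure α) {F G : α → ℝ}

lemma lintegral_ofReal_mul_le_L2_mul_L2 (hF : AEMeasurable F μ) (hG : AEMeasurable G μ)
    (hF0 : ∀ x, 0 ≤ F x) (hG0 : ∀ x, 0 ≤ G x) :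
    ∫⁻ x, ENNReal.ofReal (F x * G x) ∂μ
      ≤ (∫⁻ x, ENNReal.ofReal (F x ^ 2) ∂μ) ^ (1 / 2 : ℝ)
        * (∫⁻ x, ENNReal.ofReal (G x ^ 2) ∂μ) ^ (1 / 2 : ℝ) := by
  have hsq : ∀ {H : α → ℝ}, (∀ x, 0 ≤ H x) →
      ∫⁻ x, ENNReal.ofReal (H x) ^ (2 : ℝ) ∂μ = ∫⁻ x, ENNReal.ofReal (H x ^ 2) ∂μ := fun hH0 =>
    lintegral_congr fun x => by rw [ENNReal.rpow_two, ENNReal.ofReal_pow (hH0 x)]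
  simp_rw [ENNReal.ofReal_mul (hF0 _), ← hsq hF0, ← hsq hG0]
  simpa using ENNReal.lintegral_mul_le_Lp_mul_Lq μ Real.HolderConjugate.two_two
    hF.ennreal_ofReal hG.ennreal_ofReal

lemma setLIntegral_ofReal_mul_mul_le (S : Set α) {w : α → ℝ} {M : ℝ}
    (hF : AEMeasurable F μ) (hG : AEMeasurable G μ) (hF0 : ∀ x, 0 ≤ F x) (hG0 : ∀ x, 0 ≤ G x)
    (hw : ∀ x ∈ S, w x ≤ M) :
    ∫⁻ x in S, ENNReal.ofReal (w x * F x * G x) ∂μ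
      ≤ ENNReal.ofReal M * (∫⁻ x, ENNReal.ofReal (F x ^ 2) ∂μ) ^ (1 / 2 : ℝ)
        * (∫⁻ x, ENNReal.ofReal (G x ^ 2) ∂μ) ^ (1 / 2 : ℝ) := by
  have hFG : AEMeasurable (fun x => ENNReal.ofReal (F x * G x)) μ := (hF.mul hG).ennreal_ofReal
  calc ∫⁻ x in S, ENNReal.ofReal (w x * F x * G x) ∂μ
      ≤ ∫⁻ x in S, ENNReal.ofReal M * ENNReal.ofReal (F x * G x) ∂μ := by
        refine setLIntegral_mono_ae (hFG.const_mul _).restrict (ae_of_all _ fun x hx => ?_)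
        rw [← ENNReal.ofReal_mul' (mul_nonneg (hF0 x) (hG0 x)), mul_assoc]
        exact ENNReal.ofReal_le_ofReal
          (mul_le_mul_of_nonneg_right (hw x hx) (mul_nonneg (hF0 x) (hG0 x)))
    _ ≤ ∫⁻ x, ENNReal.ofReal M * ENNReal.ofReal (F x * G x) ∂μ := setLIntegral_le_lintegral _ _
    _ = ENNReal.ofReal M * ∫⁻ x, ENNReal.ofReal (F x * G x) ∂μ := lintegral_const_mul'' _ hFG
    _ ≤ _ := by
      rw [mul_assoc]
      gcongr
      exact lintegral_ofReal_mul_le_L2_mul_L2 μ hF hG hF0 hG0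

end CauchySchwarz

/-- Estimate of the term `II₂₁`: the symmetrized part of the integral near the
characteristic sphere, over `Ω₂ = {ξ : kt < ‖ξ⁻‖ < 3kt/2, |ξ_d| < kt/2}`. -/
theorem stmt_15 (d : ℕ) (hd : d = 2 ∨ d = 3) (s : ℝ) (hs : 0 ≤ s) :
    ∃ C > (0 : ℝ), ∀ k t : ℝ, 0 < k → 0 < t → 1 ≤ k * t →
      ∀ F G : EuclideanSpace ℝ (Fin d) → ℝ, Measurable F → Measurable G →
        (∀ ξ, 0 ≤ F ξ) → (∀ ξ, 0 ≤ G ξ) →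
        (∫⁻ ξ in {ξ | k * t < xiMinusNorm ξ ∧ xiMinusNorm ξ < 3 * k * t / 2
              ∧ |xiLast (by omega) ξ| < k * t / 2},
            ENNReal.ofReal (‖mSymb k t (by omega) ξ
                + ((2 * k * t / xiMinusNorm ξ - 1 : ℝ) ^ (d - 2) : ℝ)
                  * mSymb k t (by omega) (xiStar k t ξ)‖
              * (1 + ‖ξ‖ ^ 2) ^ s * F ξ * G ξ)) ≤
          ENNReal.ofReal (C * k ^ (2 * s) * t ^ (2 * s - 2))
            * (∫⁻ ξ, ENNReal.ofReal (F ξ ^ 2)) ^ (1 / 2 : ℝ)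
            * (∫⁻ ξ, ENNReal.ofReal (G ξ ^ 2)) ^ (1 / 2 : ℝ) := by
  refine ⟨5 * 4 ^ s, by positivity, fun k t hk ht hkt F G hF hG hF0 hG0 => ?_⟩
  have hd0 : 0 < d := by omega
  refine setLIntegral_ofReal_mul_mul_le volume _ hF.aemeasurable hG.aemeasurable hF0 hG0
    fun ξ ⟨h, h', h''⟩ => ?_
  have hr : 0 < xiMinusNorm ξ := (mul_pos hk ht).trans h
  have hc : |(2 * k * t / xiMinusNorm ξ - 1) ^ (d - 2) - 1|
      ≤ 2 * (xiMinusNorm ξ - k * t) / xiMinusNorm ξ := by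
    refine (abs_pow_sub_one_le_one_sub ?_ (by omega)).trans (le_of_eq ?_)
    · rw [sub_le_iff_le_add, div_le_iff₀ hr]; linarith
    · field_simp; ring
  calc _ ≤ 5 / t ^ 2 * (4 ^ s * ((k * t) ^ 2) ^ s) :=
        mul_le_mul (norm_mSymb_add_mul_mSymb_xiStar_le hd0 hk ht h h' hc)
          (one_add_norm_sq_rpow_le hd0 hkt hs (by linarith) h'') (by positivity) (by positivity)
    _ = 5 * 4 ^ s * k ^ (2 * s) * t ^ (2 * s - 2) := by
      rw [← Real.rpow_natCast (k * t), ← Real.rpow_mul (by positivity), Real.mul_rpow hk.le ht.le,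
        Real.rpow_sub ht, Real.rpow_two]
      push_cast
      field_simp
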